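/- Fix real numbers 0 < β < 1 and 0 < γ < 1. Let σ_γ(x) denote the fractional part of γ/x (for x ≠ 0), and let τ_β(x) denote the unique y ∈ (−1,1] with −β/x − y ∈ 2ℤ (for x ≠ 0). For N ≥ 1, let F_{γ,N} be the set of x ∈ (0,γ) such that the iterates σ_γⁿ(x) are defined and lie in (0,γ) for n = 1, …, N−1, and let E_{β,N} be the set of x ∈ (−β,β), x ≠ 0, such that the iterates τ_βⁿ(x) are defined (the orbit avoids 0) and lie in (−β,β) for n = 1, …, N−1. Then: (a) ∫_{F_{γ,N}} dt/(1+t) ≤ (2γ/(1+γ))^N · log 2; (b) ∫_{E_{β,N}} dt/(1−t²) ≤ 4β^N/(1−β); (c) the Lebesgue measures of the wandering sets F_{γ,∞} := ⋂_{N≥1} F_{γ,N} and E_{β,∞} := ⋂_{N≥1} E_{β,N} are zero. -/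

import Mathlib

open MeasureTheory

/-- The Gauss-type map `σ_γ(x) = {γ/x} mod 1`. -/
noncomputable def gaussMap (γ : ℝ) (x : ℝ) : ℝ := Int.fract (γ / x)

/-- The Gauss-type map `τ_β(x)`: the unique `y ∈ (-1,1]` with `-β/x - y ∈ 2ℤ`. -/
noncomputable def tauMap (β : ℝ) (x : ℝ) : ℝ :=
  (-β / x) - 2 * ⌈((-β / x) - 1) / 2⌉

/-- The set of points of `(0,γ)` whose first `N-1` iterates under `σ_γ`
stay in `(0,γ)`. -/
def Fset (γ : ℝ) (N : ℕ) : Set ℝ :=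
  {x | x ∈ Set.Ioo 0 γ ∧
    ∀ n : ℕ, 1 ≤ n → n ≤ N - 1 → (gaussMap γ)^[n] x ∈ Set.Ioo 0 γ}

/-- The set of points of `(-β,β) \ {0}` whose orbit under `τ_β` avoids `0` and
whose first `N-1` iterates stay in `(-β,β)`. -/
def Eset (β : ℝ) (N : ℕ) : Set ℝ :=
  {x | x ∈ Set.Ioo (-β) β ∧
    ∀ n : ℕ, n ≤ N - 1 →
      (tauMap β)^[n] x ≠ 0 ∧ (1 ≤ n → (tauMap β)^[n] x ∈ Set.Ioo (-β) β)}

/-!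
Both estimates rest on a transfer inequality for the weights `dt/(1+t)` and `dt/(1-t²)`, the
invariant densities of the classical Gauss map and of the even continued fraction map. The inverse
branches of `σ_γ` on `(0,γ)` are `y ↦ γ/(y+k)`, `k ≥ 1`, and those of `τ_β` on `(-β,β) \ {0}` are
`y ↦ -β/(y+2m)`, `m ≠ 0`. Changing variables along each branch and summing the Jacobian factors,
which telescope, shows that for `A ⊆ [0,1)` the weight of `(0,γ) ∩ σ_γ⁻¹ A` is at most `2γ/(1+γ)`
times that of `A`, and for `A ⊆ (-1,1)` the weight of `(-β,β) ∩ τ_β⁻¹ A` is at most `β` times that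
of `A`. Since `F_{γ,N+1} = (0,γ) ∩ σ_γ⁻¹ F_{γ,N}` and likewise for `E`, the weights of these sets
decay geometrically, and as the densities are positive the wandering sets are null.
-/

open Set Filter Topology
open scoped ENNReal

theorem tsum_ofReal_le_of_le_mul_sub_succ {t f : ℕ → ℝ} {c : ℝ} (hc : 0 ≤ c) (hf : Antitone f)
    (hf0 : ∀ n, 0 ≤ f n) (ht : ∀ n, t n ≤ c * (f n - f (n + 1))) :
    ∑' n, ENNReal.ofReal (t n) ≤ ENNReal.ofReal c * ENNReal.ofReal (f 0) := by
  rw [ENNReal.tsum_eq_iSup_nat, ← ENNReal.ofReal_mul hc]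
  refine iSup_le fun n => ?_
  calc ∑ i ∈ Finset.range n, ENNReal.ofReal (t i)
      ≤ ∑ i ∈ Finset.range n, ENNReal.ofReal (c * (f i - f (i + 1))) :=
        Finset.sum_le_sum fun i _ => ENNReal.ofReal_le_ofReal (ht i)
    _ = ENNReal.ofReal (c * (f 0 - f n)) := by
        rw [← ENNReal.ofReal_sum_of_nonneg fun i _ => mul_nonneg hc (sub_nonneg.2 (hf i.le_succ)),
          ← Finset.mul_sum, Finset.sum_range_sub']
    _ ≤ ENNReal.ofReal (c * f 0) :=
        ENNReal.ofReal_le_ofReal (mul_le_mul_of_nonneg_left (sub_le_self _ (hf0 n)) hc)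

theorem setLIntegral_le_of_subset_iUnion_image_div_add {ι : Type*} [Countable ι] {a : ℝ}
    (ha : a ≠ 0) {d : ι → ℝ} {A S : Set ℝ} (hA : MeasurableSet A)
    (hd : ∀ i, ∀ y ∈ A, y + d i ≠ 0) (hS : S ⊆ ⋃ i, (fun y => a / (y + d i)) '' A)
    {g h : ℝ → ℝ≥0∞} (hg : Measurable g)
    (hgh : ∀ y ∈ A, ∑' i, ENNReal.ofReal (|a| / (y + d i) ^ 2) * g (a / (y + d i)) ≤ h y) :
    ∫⁻ x in S, g x ≤ ∫⁻ y in A, h y := by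
  have hbranch : ∀ i, ∫⁻ x in (fun y => a / (y + d i)) '' A, g x
      = ∫⁻ y in A, ENNReal.ofReal (|a| / (y + d i) ^ 2) * g (a / (y + d i)) := by
    intro i
    have hderiv : ∀ y ∈ A, HasDerivWithinAt (fun y => a / (y + d i)) (-a / (y + d i) ^ 2) A y :=
      fun y hy => (((hasDerivAt_const y a).div ((hasDerivAt_id y).add_const (d i))
        (hd i y hy)).congr_deriv (by simp)).hasDerivWithinAt
    have hinj : InjOn (fun y => a / (y + d i)) A := fun y₁ h₁ y₂ h₂ h => by
      have := (div_eq_div_iff (hd i y₁ h₁) (hd i y₂ h₂)).1 h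
      have := mul_left_cancel₀ ha this
      linarith
    rw [lintegral_image_eq_lintegral_abs_deriv_mul hA hderiv hinj]
    refine setLIntegral_congr_fun hA fun y _ => ?_
    rw [abs_div, abs_neg, abs_of_nonneg (sq_nonneg (y + d i))]
  calc ∫⁻ x in S, g x ≤ ∫⁻ x in ⋃ i, (fun y => a / (y + d i)) '' A, g x := lintegral_mono_set hS
    _ ≤ ∑' i, ∫⁻ x in (fun y => a / (y + d i)) '' A, g x := lintegral_iUnion_le _ _
    _ = ∫⁻ y in A, ∑' i, ENNReal.ofReal (|a| / (y + d i) ^ 2) * g (a / (y + d i)) := by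
        rw [lintegral_tsum fun i => by fun_prop]
        exact tsum_congr hbranch
    _ ≤ ∫⁻ y in A, h y := setLIntegral_mono' hA hgh

theorem setIntegral_le_of_setLIntegral_ofReal_le {α : Type*} [MeasurableSpace α] {μ : Measure α}
    {s : Set α} (hs : MeasurableSet s) {f : α → ℝ} (hf : ∀ x ∈ s, 0 ≤ f x) {b : ℝ} (hb : 0 ≤ b)
    (h : ∫⁻ x in s, ENNReal.ofReal (f x) ∂μ ≤ ENNReal.ofReal b) : ∫ x in s, f x ∂μ ≤ b := by
  by_cases hm : AEStronglyMeasurable f (μ.restrict s)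
  · rw [integral_eq_lintegral_of_nonneg_ae (ae_restrict_of_forall_mem hs hf) hm]
    exact ENNReal.toReal_le_of_le_ofReal hb h
  · rw [integral_non_aestronglyMeasurable hm]
    exact hb

theorem measure_eq_zero_of_setLIntegral_le_tendsto_zero {α : Type*} [MeasurableSpace α]
    {μ : Measure α} {s : Set α} (hs : MeasurableSet s) {g : α → ℝ≥0∞} (hg : Measurable g)
    (hpos : ∀ x ∈ s, g x ≠ 0) {b : ℕ → ℝ≥0∞} (hb : Tendsto b atTop (𝓝 0))
    (h : ∀ N, ∫⁻ x in s, g x ∂μ ≤ b N) : μ s = 0 := by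
  have h0 : ∫⁻ x in s, g x ∂μ = 0 := nonpos_iff_eq_zero.1 (ge_of_tendsto' hb h)
  rw [lintegral_eq_zero_iff hg, EventuallyEq, ae_restrict_iff' hs] at h0
  rw [measure_eq_zero_iff_ae_notMem]
  filter_upwards [h0] with x hx hxs using hpos x hxs (hx hxs)

theorem tendsto_pow_succ_mul_nhds_zero {r C : ℝ≥0∞} (hr : r < 1) (hC : C ≠ ⊤) :
    Tendsto (fun N : ℕ => r ^ (N + 1) * C) atTop (𝓝 0) := by
  simpa using ENNReal.Tendsto.mul_const
    ((ENNReal.tendsto_pow_atTop_nhds_zero_of_lt_one hr).comp (tendsto_add_atTop_nat 1))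
    (Or.inr hC)

theorem measurableSet_setOf_forall_lt_iterate_mem {α : Type*} [MeasurableSpace α] {f : α → α}
    (hf : Measurable f) {s : Set α} (hs : MeasurableSet s) (N : ℕ) :
    MeasurableSet {x | ∀ n < N, f^[n] x ∈ s} := by
  simp only [ofPred_forall]
  exact .iInter fun n => .iInter fun _ => hf.iterate n hs

noncomputable def gaussDensity (t : ℝ) : ℝ≥0∞ := ENNReal.ofReal (1 / (1 + t))

theorem measurable_gaussDensity : Measurable gaussDensity := by
  unfold gaussDensity; fun_prop

theorem measurable_gaussMap (γ : ℝ) : Measurable (gaussMap γ) :=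
  (measurable_const.div measurable_id).fract

theorem Ioo_inter_preimage_gaussMap_subset {γ : ℝ} (hγ : 0 < γ) (A : Set ℝ) :
    Ioo 0 γ ∩ gaussMap γ ⁻¹' A ⊆ ⋃ k : ℕ, (fun y => γ / (y + (k + 1))) '' A := by
  rintro x ⟨⟨hx0, hxγ⟩, hxA⟩
  have hfloor : 1 ≤ ⌊γ / x⌋ := Int.le_floor.2 (by exact_mod_cast ((one_lt_div hx0).2 hxγ).le)
  obtain ⟨k, hk⟩ := Int.eq_ofNat_of_zero_le (sub_nonneg.2 hfloor)
  have hkx : (k : ℝ) + 1 = ⌊γ / x⌋ := by exact_mod_cast (by omega : (k : ℤ) + 1 = ⌊γ / x⌋)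
  refine mem_iUnion.2 ⟨k, gaussMap γ x, hxA, ?_⟩
  simp only [gaussMap, hkx, Int.fract_add_floor, div_div_cancel₀ hγ.ne']

theorem gaussBranch_le {γ t : ℝ} (hγ0 : 0 < γ) (hγ1 : γ ≤ 1) (ht : 1 ≤ t) :
    γ / t ^ 2 * (1 / (1 + γ / t)) ≤ 2 * γ / (1 + γ) * (1 / t - 1 / (t + 1)) := by
  have ht0 : 0 < t := by linarith
  have hlhs : γ / t ^ 2 * (1 / (1 + γ / t)) = γ / (t * (t + γ)) := by field_simp
  have hrhs : 2 * γ / (1 + γ) * (1 / t - 1 / (t + 1)) = 2 * γ / ((1 + γ) * (t * (t + 1))) := by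
    field_simp; ring
  rw [hlhs, hrhs, div_le_div_iff₀ (by positivity) (by positivity)]
  -- cleared of denominators, the difference of the two sides is `γ t (t - 1)(1 - γ) ≥ 0`
  nlinarith [mul_nonneg (mul_nonneg hγ0.le (sub_nonneg.2 ht)) (sub_nonneg.2 hγ1)]

theorem tsum_gaussBranch_le {γ y : ℝ} (hγ0 : 0 < γ) (hγ1 : γ ≤ 1) (hy : 0 ≤ y) :
    ∑' k : ℕ, ENNReal.ofReal (|γ| / (y + (k + 1)) ^ 2) * gaussDensity (γ / (y + (k + 1)))
      ≤ ENNReal.ofReal (2 * γ / (1 + γ)) * gaussDensity y := by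
  have hterm : ∀ k : ℕ,
      ENNReal.ofReal (|γ| / (y + (k + 1)) ^ 2) * gaussDensity (γ / (y + (k + 1)))
        = ENNReal.ofReal (γ / (y + (k + 1)) ^ 2 * (1 / (1 + γ / (y + (k + 1))))) := fun k => by
    rw [gaussDensity, abs_of_pos hγ0, ENNReal.ofReal_mul (by positivity)]
  simp only [hterm]
  refine (tsum_ofReal_le_of_le_mul_sub_succ (c := 2 * γ / (1 + γ))
    (f := fun k : ℕ => 1 / (y + (k + 1))) (by positivity)
    (fun m n hmn => one_div_le_one_div_of_le (by positivity) (by gcongr))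
    (fun n => by positivity) (fun k => ?_)).trans_eq (by simp [gaussDensity, add_comm])
  have hk : y + ((k + 1 : ℕ) + 1 : ℝ) = y + (k + 1) + 1 := by push_cast; ring
  simpa only [hk] using
    gaussBranch_le hγ0 hγ1 (t := y + (k + 1)) (by linarith [k.cast_nonneg (α := ℝ)])

theorem setLIntegral_gaussDensity_preimage_le {γ : ℝ} (hγ0 : 0 < γ) (hγ1 : γ ≤ 1) {A : Set ℝ}
    (hA : MeasurableSet A) (hA0 : A ⊆ Ici 0) :
    ∫⁻ x in Ioo 0 γ ∩ gaussMap γ ⁻¹' A, gaussDensity x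
      ≤ ENNReal.ofReal (2 * γ / (1 + γ)) * ∫⁻ y in A, gaussDensity y := by
  rw [← lintegral_const_mul _ measurable_gaussDensity]
  refine setLIntegral_le_of_subset_iUnion_image_div_add hγ0.ne' hA (fun k y hy => ?_)
    (Ioo_inter_preimage_gaussMap_subset hγ0 A) measurable_gaussDensity
    (fun y hy => tsum_gaussBranch_le hγ0 hγ1 (hA0 hy))
  have : (0 : ℝ) ≤ y := hA0 hy
  positivity

theorem setLIntegral_gaussDensity_Ico : ∫⁻ t in Ico (0 : ℝ) 1, gaussDensity t
    = ENNReal.ofReal (Real.log 2) := by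
  have hcont : ContinuousOn (fun t : ℝ => 1 / (1 + t)) (Icc 0 1) :=
    continuousOn_const.div (by fun_prop) fun t ht => by linarith [ht.1]
  rw [setLIntegral_congr Ico_ae_eq_Ioc]
  unfold gaussDensity
  rw [← ofReal_integral_eq_lintegral_ofReal
    (hcont.integrableOn_Icc.mono_set Ioc_subset_Icc_self)
    (ae_restrict_of_forall_mem measurableSet_Ioc fun t ht => by have := ht.1; positivity),
    ← intervalIntegral.integral_of_le zero_le_one, intervalIntegral.integral_comp_add_left
    (fun u => 1 / u), integral_one_div (by simp)]
  norm_num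

theorem Fset_eq {γ : ℝ} {N : ℕ} (hN : 1 ≤ N) :
    Fset γ N = {x | ∀ n < N, (gaussMap γ)^[n] x ∈ Ioo 0 γ} := by
  ext x
  refine ⟨fun ⟨h0, h⟩ n hn => ?_, fun h => ⟨h 0 (by omega), fun n _ hn => h n (by omega)⟩⟩
  rcases n with _ | n
  · exact h0
  · exact h _ (by omega) (by omega)

theorem measurableSet_Fset (γ : ℝ) {N : ℕ} (hN : 1 ≤ N) : MeasurableSet (Fset γ N) := by
  rw [Fset_eq hN]
  exact measurableSet_setOf_forall_lt_iterate_mem (measurable_gaussMap γ) measurableSet_Ioo N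

theorem Fset_subset_Ioo {γ : ℝ} {N : ℕ} : Fset γ N ⊆ Ioo 0 γ := fun _ hx => hx.1

theorem Fset_one (γ : ℝ) : Fset γ 1 = Ioo 0 γ ∩ gaussMap γ ⁻¹' Ico 0 1 := by
  ext x
  simp [Fset_eq le_rfl, gaussMap, Int.fract_nonneg, Int.fract_lt_one]

theorem Fset_succ (γ : ℝ) {N : ℕ} (hN : 1 ≤ N) :
    Fset γ (N + 1) = Ioo 0 γ ∩ gaussMap γ ⁻¹' Fset γ N := by
  ext x
  simp only [Fset_eq hN, Fset_eq (Nat.le_add_left 1 N), mem_ofPred_eq, mem_inter_iff,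
    mem_preimage, Nat.forall_lt_succ_left, Function.iterate_zero_apply, Function.iterate_succ_apply]

theorem setLIntegral_Fset_le {γ : ℝ} (hγ0 : 0 < γ) (hγ1 : γ ≤ 1) (N : ℕ) :
    ∫⁻ x in Fset γ (N + 1), gaussDensity x
      ≤ ENNReal.ofReal (2 * γ / (1 + γ)) ^ (N + 1) * ENNReal.ofReal (Real.log 2) := by
  induction N with
  | zero =>
    rw [Fset_one, zero_add, pow_one, ← setLIntegral_gaussDensity_Ico]
    exact setLIntegral_gaussDensity_preimage_le hγ0 hγ1 measurableSet_Ico fun y hy => hy.1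
  | succ N ih =>
    rw [Fset_succ γ (Nat.le_add_left 1 N), pow_succ', mul_assoc]
    refine (setLIntegral_gaussDensity_preimage_le hγ0 hγ1
      (measurableSet_Fset γ (Nat.le_add_left 1 N)) fun y hy => (Fset_subset_Ioo hy).1.le).trans
      (by gcongr)

noncomputable def tauDensity (t : ℝ) : ℝ≥0∞ := ENNReal.ofReal (1 / (1 - t ^ 2))

theorem measurable_tauDensity : Measurable tauDensity := by
  unfold tauDensity; fun_prop

theorem measurable_tauMap (β : ℝ) : Measurable (tauMap β) := by
  unfold tauMap
  have h : Measurable fun x : ℝ => -β / x := measurable_const.div measurable_id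
  exact h.sub (measurable_const.mul (measurable_from_top.comp ((h.sub_const 1).div_const 2).ceil))

theorem tauMap_mem_Ioc (β x : ℝ) : tauMap β x ∈ Ioc (-1) 1 := by
  have h₁ := Int.le_ceil ((-β / x - 1) / 2)
  have h₂ := Int.ceil_lt_add_one ((-β / x - 1) / 2)
  constructor <;> unfold tauMap <;> linarith

/-- The shifts `2m`, `m ≠ 0`, of the inverse branches `y ↦ -β/(y+2m)` of `τ_β`; the two summands
carry `m > 0` and `m < 0`. -/
def tauShift : ℕ ⊕ ℕ → ℝ := Sum.elim (fun k => 2 * (k + 1)) (fun k => -(2 * (k + 1)))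

theorem exists_tauShift_eq {m : ℤ} (hm : m ≠ 0) : ∃ i, tauShift i = 2 * m := by
  obtain ⟨n, rfl | rfl⟩ := Int.eq_nat_or_neg m <;>
  obtain ⟨k, rfl⟩ := Nat.exists_eq_add_one.2 (Nat.pos_of_ne_zero (by omega : n ≠ 0))
  · exact ⟨.inl k, by simp [tauShift]⟩
  · exact ⟨.inr k, by simp [tauShift]; ring⟩

theorem Ioo_diff_inter_preimage_tauMap_subset {β : ℝ} (hβ : 0 < β) (A : Set ℝ) :
    (Ioo (-β) β \ {0}) ∩ tauMap β ⁻¹' A ⊆ ⋃ i, (fun y => -β / (y + tauShift i)) '' A := by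
  rintro x ⟨⟨hxβ, hx0⟩, hxA⟩
  set m := ⌈(-β / x - 1) / 2⌉
  have hdecomp : tauMap β x + 2 * m = -β / x := by unfold tauMap; ring
  have hm : m ≠ 0 := by
    intro hm0
    have h1 : 1 < |-β / x| := by
      rw [abs_div, abs_neg, abs_of_pos hβ, one_lt_div (abs_pos.2 hx0)]
      exact abs_lt.2 hxβ
    have h2 := tauMap_mem_Ioc β x
    rw [hm0, Int.cast_zero, mul_zero, add_zero] at hdecomp
    rw [← hdecomp] at h1
    exact h1.not_ge (abs_le.2 ⟨h2.1.le, h2.2⟩)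
  obtain ⟨i, hi⟩ := exists_tauShift_eq hm
  refine mem_iUnion.2 ⟨i, tauMap β x, hxA, ?_⟩
  simp only [hi, hdecomp, div_div_cancel₀ (neg_ne_zero.2 hβ.ne')]

theorem ofReal_abs_div_sq_mul_tauDensity {β w : ℝ} (hβ : 0 < β) (hw : β ^ 2 < w ^ 2) :
    ENNReal.ofReal (|-β| / w ^ 2) * tauDensity (-β / w)
      = ENNReal.ofReal (β / (w ^ 2 - β ^ 2)) := by
  have hw0 : w ≠ 0 := by rintro rfl; nlinarith
  have hsub : 0 < w ^ 2 - β ^ 2 := by linarith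
  rw [tauDensity, abs_neg, abs_of_pos hβ, ← ENNReal.ofReal_mul (by positivity)]
  congr 1
  field_simp

theorem tauBranch_le {β w : ℝ} (hβ0 : 0 ≤ β) (hβ1 : β ≤ 1) (hw : 1 < w) :
    β / (w ^ 2 - β ^ 2) ≤ β / 2 * (1 / (w - 1) - 1 / (w + 1)) := by
  have hw1 : 0 < w - 1 := by linarith
  have hw2 : 0 < w ^ 2 - 1 := by nlinarith
  have hrhs : β / 2 * (1 / (w - 1) - 1 / (w + 1)) = β / (w ^ 2 - 1) := by
    field_simp; ring
  rw [hrhs]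
  exact div_le_div_of_nonneg_left hβ0 (by nlinarith) (by nlinarith)

theorem tsum_tauBranch_half_le {β z : ℝ} (hβ0 : 0 ≤ β) (hβ1 : β ≤ 1) (hz : -1 < z) :
    ∑' k : ℕ, ENNReal.ofReal (β / ((z + 2 * (k + 1)) ^ 2 - β ^ 2))
      ≤ ENNReal.ofReal (β / 2) * ENNReal.ofReal (1 / (1 + z)) := by
  have hpos : ∀ n : ℕ, 0 < z + 2 * n + 1 := fun n => by linarith [n.cast_nonneg (α := ℝ)]
  refine (tsum_ofReal_le_of_le_mul_sub_succ (c := β / 2) (f := fun k : ℕ => 1 / (z + 2 * k + 1))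
    (by positivity) (fun m n hmn => one_div_le_one_div_of_le (hpos m) (by gcongr))
    (fun n => (one_div_pos.2 (hpos n)).le) (fun k => ?_)).trans_eq (by simp [add_comm])
  have h := tauBranch_le hβ0 hβ1 (w := z + 2 * (k + 1)) (by linarith [hpos k])
  convert h using 4 <;> push_cast <;> ring

theorem tsum_tauBranch_le {β y : ℝ} (hβ0 : 0 < β) (hβ1 : β ≤ 1) (hy : y ∈ Ioo (-1) 1) :
    ∑' i, ENNReal.ofReal (|-β| / (y + tauShift i) ^ 2) * tauDensity (-β / (y + tauShift i))
      ≤ ENNReal.ofReal β * tauDensity y := by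
  obtain ⟨hy₁, hy₂⟩ := hy
  have hinl : ∀ k : ℕ, β ^ 2 < (y + 2 * (k + 1)) ^ 2 := fun k => by
    nlinarith [k.cast_nonneg (α := ℝ)]
  have hinr : ∀ k : ℕ, β ^ 2 < (y + -(2 * (k + 1))) ^ 2 := fun k => by
    nlinarith [k.cast_nonneg (α := ℝ)]
  rw [ENNReal.summable.tsum_sum ENNReal.summable]
  simp only [tauShift, Sum.elim_inl, Sum.elim_inr,
    ofReal_abs_div_sq_mul_tauDensity hβ0 (hinl _), ofReal_abs_div_sq_mul_tauDensity hβ0 (hinr _)]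
  -- the branches with negative shift are those with positive shift, reflected by `y ↦ -y`
  have hrefl : ∀ k : ℕ, (y + -(2 * (k + 1 : ℝ))) ^ 2 = (-y + 2 * (k + 1)) ^ 2 := fun k => by ring
  simp only [hrefl]
  refine (add_le_add (tsum_tauBranch_half_le hβ0.le hβ1 (by linarith))
    (tsum_tauBranch_half_le hβ0.le hβ1 (by linarith))).trans_eq ?_
  have h₁ : 0 < 1 + y := by linarith
  have h₂ : 0 < 1 + -y := by linarith
  have h₃ : 0 < 1 - y ^ 2 := by nlinarith
  rw [tauDensity, ← ENNReal.ofReal_mul (by positivity), ← ENNReal.ofReal_mul (by positivity),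
    ← ENNReal.ofReal_add (by positivity) (by positivity), ← ENNReal.ofReal_mul hβ0.le]
  congr 1
  field_simp
  ring

theorem setLIntegral_tauDensity_preimage_le {β : ℝ} (hβ0 : 0 < β) (hβ1 : β ≤ 1) {A : Set ℝ}
    (hA : MeasurableSet A) (hA1 : A ⊆ Ioo (-1) 1) :
    ∫⁻ x in (Ioo (-β) β \ {0}) ∩ tauMap β ⁻¹' A, tauDensity x
      ≤ ENNReal.ofReal β * ∫⁻ y in A, tauDensity y := by
  rw [← lintegral_const_mul _ measurable_tauDensity]
  refine setLIntegral_le_of_subset_iUnion_image_div_add (neg_ne_zero.2 hβ0.ne') hA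
    (fun i y hy => ?_) (Ioo_diff_inter_preimage_tauMap_subset hβ0 A) measurable_tauDensity
    (fun y hy => tsum_tauBranch_le hβ0 hβ1 (hA1 hy))
  obtain ⟨hy₁, hy₂⟩ := hA1 hy
  rcases i with k | k <;> simp only [tauShift, Sum.elim_inl, Sum.elim_inr] <;>
    nlinarith [k.cast_nonneg (α := ℝ)]

theorem Eset_eq {β : ℝ} {N : ℕ} (hN : 1 ≤ N) :
    Eset β N = {x | ∀ n < N, (tauMap β)^[n] x ∈ Ioo (-β) β \ {0}} := by
  ext x
  refine ⟨fun ⟨h0, h⟩ n hn => ⟨?_, (h n (by omega)).1⟩,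
    fun h => ⟨(h 0 (by omega)).1, fun n hn => ⟨(h n (by omega)).2, fun _ => (h n (by omega)).1⟩⟩⟩
  rcases n with _ | n
  · exact h0
  · exact (h _ (by omega)).2 (by omega)

theorem measurableSet_Eset (β : ℝ) {N : ℕ} (hN : 1 ≤ N) : MeasurableSet (Eset β N) := by
  rw [Eset_eq hN]
  exact measurableSet_setOf_forall_lt_iterate_mem (measurable_tauMap β)
    (measurableSet_Ioo.diff (measurableSet_singleton 0)) N

theorem Eset_subset_Ioo {β : ℝ} {N : ℕ} : Eset β N ⊆ Ioo (-β) β := fun _ hx => hx.1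

theorem Eset_one (β : ℝ) : Eset β 1 = Ioo (-β) β \ {0} := by
  ext x
  simp [Eset_eq le_rfl]

theorem Eset_succ (β : ℝ) {N : ℕ} (hN : 1 ≤ N) :
    Eset β (N + 1) = (Ioo (-β) β \ {0}) ∩ tauMap β ⁻¹' Eset β N := by
  ext x
  simp only [Eset_eq hN, Eset_eq (Nat.le_add_left 1 N), mem_ofPred_eq, mem_inter_iff,
    mem_preimage, Nat.forall_lt_succ_left, Function.iterate_zero_apply,
    Function.iterate_succ_apply]

theorem setLIntegral_tauDensity_Ioo_diff_le {β : ℝ} (hβ0 : 0 ≤ β) (hβ1 : β < 1) :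
    ∫⁻ x in Ioo (-β) β \ {0}, tauDensity x
      ≤ ENNReal.ofReal β * ENNReal.ofReal (2 / (1 - β)) := by
  have hβ : 0 < 1 - β := sub_pos.2 hβ1
  have hbound : ∀ x ∈ Ioo (-β) β, tauDensity x ≤ ENNReal.ofReal (1 / (1 - β)) := fun x hx =>
    ENNReal.ofReal_le_ofReal (one_div_le_one_div_of_le hβ (by nlinarith [hx.1, hx.2]))
  calc ∫⁻ x in Ioo (-β) β \ {0}, tauDensity x
      ≤ ∫⁻ _ in Ioo (-β) β, ENNReal.ofReal (1 / (1 - β)) :=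
        (lintegral_mono_set sdiff_subset).trans (setLIntegral_mono' measurableSet_Ioo hbound)
    _ = ENNReal.ofReal β * ENNReal.ofReal (2 / (1 - β)) := by
        rw [setLIntegral_const, Real.volume_Ioo, ← ENNReal.ofReal_mul (by positivity),
          ← ENNReal.ofReal_mul hβ0]
        congr 1
        ring

theorem setLIntegral_Eset_le {β : ℝ} (hβ0 : 0 < β) (hβ1 : β < 1) (N : ℕ) :
    ∫⁻ x in Eset β (N + 1), tauDensity x
      ≤ ENNReal.ofReal β ^ (N + 1) * ENNReal.ofReal (2 / (1 - β)) := by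
  induction N with
  | zero =>
    rw [Eset_one, zero_add, pow_one]
    exact setLIntegral_tauDensity_Ioo_diff_le hβ0.le hβ1
  | succ N ih =>
    rw [Eset_succ β (Nat.le_add_left 1 N), pow_succ', mul_assoc]
    refine (setLIntegral_tauDensity_preimage_le hβ0 hβ1.le
      (measurableSet_Eset β (Nat.le_add_left 1 N)) fun y hy => ?_).trans (by gcongr)
    exact Ioo_subset_Ioo (by linarith) hβ1.le (Eset_subset_Ioo hy)

theorem one_sub_sq_pos_of_mem_Ioo {β t : ℝ} (hβ : β ≤ 1) (ht : t ∈ Ioo (-β) β) :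
    0 < 1 - t ^ 2 := by
  nlinarith [ht.1, ht.2]

theorem setIntegral_Fset_le {γ : ℝ} (hγ0 : 0 < γ) (hγ1 : γ ≤ 1) {N : ℕ} (hN : 1 ≤ N) :
    ∫ t in Fset γ N, 1 / (1 + t) ≤ (2 * γ / (1 + γ)) ^ N * Real.log 2 := by
  obtain ⟨N, rfl⟩ := Nat.exists_eq_add_one.2 hN
  refine setIntegral_le_of_setLIntegral_ofReal_le (measurableSet_Fset γ hN)
    (fun t ht => by have := (Fset_subset_Ioo ht).1; positivity) (by positivity) ?_
  rw [ENNReal.ofReal_mul (by positivity), ENNReal.ofReal_pow (by positivity)]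
  exact setLIntegral_Fset_le hγ0 hγ1 N

theorem setIntegral_Eset_le {β : ℝ} (hβ0 : 0 < β) (hβ1 : β < 1) {N : ℕ} (hN : 1 ≤ N) :
    ∫ t in Eset β N, 1 / (1 - t ^ 2) ≤ 4 * β ^ N / (1 - β) := by
  obtain ⟨N, rfl⟩ := Nat.exists_eq_add_one.2 hN
  have hβ : 0 < 1 - β := sub_pos.2 hβ1
  refine setIntegral_le_of_setLIntegral_ofReal_le (measurableSet_Eset β hN)
    (fun t ht => (one_div_pos.2 (one_sub_sq_pos_of_mem_Ioo hβ1.le (Eset_subset_Ioo ht))).le)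
    (by positivity) ?_
  calc ∫⁻ t in Eset β (N + 1), tauDensity t
      ≤ ENNReal.ofReal β ^ (N + 1) * ENNReal.ofReal (2 / (1 - β)) :=
        setLIntegral_Eset_le hβ0 hβ1 N
    _ = ENNReal.ofReal (2 * β ^ (N + 1) / (1 - β)) := by
        rw [← ENNReal.ofReal_pow hβ0.le, ← ENNReal.ofReal_mul (by positivity), mul_div_assoc']
        ring_nf
    _ ≤ ENNReal.ofReal (4 * β ^ (N + 1) / (1 - β)) := by gcongr; norm_num

theorem volume_iInter_Fset {γ : ℝ} (hγ0 : 0 < γ) (hγ1 : γ < 1) :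
    volume (⋂ N : ℕ, Fset γ (N + 1)) = 0 := by
  refine measure_eq_zero_of_setLIntegral_le_tendsto_zero
    (.iInter fun N => measurableSet_Fset γ (Nat.le_add_left 1 N)) measurable_gaussDensity
    (fun x hx => ?_)
    (tendsto_pow_succ_mul_nhds_zero (ENNReal.ofReal_lt_one.2 ((div_lt_one (by positivity)).2
      (by linarith))) ENNReal.ofReal_ne_top)
    fun N => (lintegral_mono_set (iInter_subset _ N)).trans (setLIntegral_Fset_le hγ0 hγ1.le N)
  have := (Fset_subset_Ioo (mem_iInter.1 hx 0)).1
  exact (ENNReal.ofReal_pos.2 (by positivity)).ne'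

theorem volume_iInter_Eset {β : ℝ} (hβ0 : 0 < β) (hβ1 : β < 1) :
    volume (⋂ N : ℕ, Eset β (N + 1)) = 0 := by
  refine measure_eq_zero_of_setLIntegral_le_tendsto_zero
    (.iInter fun N => measurableSet_Eset β (Nat.le_add_left 1 N)) measurable_tauDensity
    (fun x hx => ?_)
    (tendsto_pow_succ_mul_nhds_zero (ENNReal.ofReal_lt_one.2 hβ1) ENNReal.ofReal_ne_top)
    fun N => (lintegral_mono_set (iInter_subset _ N)).trans (setLIntegral_Eset_le hβ0 hβ1 N)
  exact (ENNReal.ofReal_pos.2 (one_div_pos.2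
    (one_sub_sq_pos_of_mem_Ioo hβ1.le (Eset_subset_Ioo (mem_iInter.1 hx 0))))).ne'

/-- Geometric decay of the measures of `Fset γ N`, `Eset β N`, and nullity of
the wandering sets. -/
theorem stmt_18 (β γ : ℝ) (hβ0 : 0 < β) (hβ1 : β < 1) (hγ0 : 0 < γ) (hγ1 : γ < 1) :
    (∀ N : ℕ, 1 ≤ N →
      (∫ t in Fset γ N, 1 / (1 + t)) ≤ (2 * γ / (1 + γ)) ^ N * Real.log 2) ∧
    (∀ N : ℕ, 1 ≤ N →
      (∫ t in Eset β N, 1 / (1 - t ^ 2)) ≤ 4 * β ^ N / (1 - β)) ∧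
    volume (⋂ N : ℕ, Fset γ (N + 1)) = 0 ∧
    volume (⋂ N : ℕ, Eset β (N + 1)) = 0 :=
  ⟨fun _ => setIntegral_Fset_le hγ0 hγ1.le, fun _ => setIntegral_Eset_le hβ0 hβ1,
    volume_iInter_Fset hγ0 hγ1, volume_iInter_Eset hβ0 hβ1⟩
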